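/- The function K(x) = (√π/2)(e^{-x²}/x)·erfi(x) is strictly decreasing on (0, ∞). -/

import Mathlib

open MeasureTheory

/-- The imaginary error function erfi(x) = (2/√π) ∫₀ˣ e^{t²} dt. -/
noncomputable def erfi (x : ℝ) : ℝ :=
  (2 / Real.sqrt Real.pi) * ∫ t in (0:ℝ)..x, Real.exp (t^2)

/-- K(x) = (√π/2)(e^{-x²}/x)·erfi(x). -/
noncomputable def K (x : ℝ) : ℝ :=
  (Real.sqrt Real.pi / 2) * (Real.exp (-x^2) / x) * erfi x

noncomputable def Faux (x : ℝ) : ℝ := ∫ t in (0:ℝ)..x, Real.exp (t^2)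

lemma contExpSq : Continuous fun t : ℝ => Real.exp (t^2) := by continuity

lemma hFaux (x : ℝ) : HasDerivAt Faux (Real.exp (x^2)) x :=
  (contExpSq.integral_hasStrictDerivAt 0 x).hasDerivAt

lemma hSq (x : ℝ) : HasDerivAt (fun y : ℝ => y^2) (2*x) x := by
  simpa using hasDerivAt_pow 2 x

/-- auxiliary function H(x) = x e^{x²} / (1+2x²) and its derivative -/
lemma hHaux (x : ℝ) :
    HasDerivAt (fun y : ℝ => y * Real.exp (y^2) / (1 + 2*y^2))
      (Real.exp (x^2) * (1 + 4*x^4) / (1 + 2*x^2)^2) x := by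
  have hden : (1 + 2*x^2) ≠ 0 := by positivity
  have hu : HasDerivAt (fun y : ℝ => y * Real.exp (y^2))
      (1 * Real.exp (x^2) + x * (Real.exp (x^2) * (2*x))) x :=
    (hasDerivAt_id x).mul (hSq x).exp
  have hv : HasDerivAt (fun y : ℝ => 1 + 2*y^2) (0 + 2*(2*x)) x :=
    (hasDerivAt_const x 1).add ((hSq x).const_mul 2)
  have := hu.div hv hden
  exact this.congr_deriv (by ring)

lemma key (x : ℝ) (hx : 0 < x) : x * Real.exp (x^2) < (1 + 2*x^2) * Faux x := by
  set D : ℝ → ℝ := fun y => Faux y - y * Real.exp (y^2) / (1 + 2*y^2) with hD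
  have hDd : ∀ y : ℝ, HasDerivAt D
      (Real.exp (y^2) - Real.exp (y^2) * (1 + 4*y^4) / (1 + 2*y^2)^2) y :=
    fun y => (hFaux y).sub (hHaux y)
  have hmono : StrictMonoOn D (Set.Ici 0) := by
    apply strictMonoOn_of_deriv_pos (convex_Ici 0)
    · exact Continuous.continuousOn (by
        have : Differentiable ℝ D := fun y => (hDd y).differentiableAt
        exact this.continuous)
    · intro y hy
      rw [interior_Ici] at hy
      rw [(hDd y).deriv]
      have h2 : (0:ℝ) < 1 + 2*y^2 := by positivity
      rw [sub_pos, div_lt_iff₀ (by positivity)]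
      have he : (0:ℝ) < Real.exp (y^2) := Real.exp_pos _
      have : (1 + 4*y^4) < (1 + 2*y^2)^2 := by nlinarith [sq_nonneg y, Set.mem_Ioi.1 hy]
      nlinarith
  have h0 : D 0 = 0 := by
    simp [hD, Faux]
  have := hmono (Set.self_mem_Ici) (Set.mem_Ici.2 hx.le) hx
  rw [h0, hD] at this
  have h2 : (0:ℝ) < 1 + 2*x^2 := by positivity
  have := (div_lt_iff₀ h2).1 (by linarith [this] : x * Real.exp (x^2) / (1 + 2*x^2) < Faux x)
  linarith

lemma G_strictAnti : StrictAntiOn (fun x => Real.exp (-x^2) * Faux x / x) (Set.Ioi (0:ℝ)) := by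
  apply strictAntiOn_of_deriv_neg (convex_Ioi 0)
  · apply ContinuousOn.div
    · have hFc : Continuous Faux :=
        Differentiable.continuous (fun y => (hFaux y).differentiableAt)
      exact Continuous.continuousOn (by continuity)
    · exact continuousOn_id
    · intro x hx; exact (Set.mem_Ioi.1 hx).ne'
  · intro x hx
    rw [interior_Ioi] at hx
    have hx0 : x ≠ 0 := (Set.mem_Ioi.1 hx).ne'
    have hne : HasDerivAt (fun y : ℝ => -y^2) (-(2*x)) x := (hSq x).neg
    have hp : HasDerivAt (fun y : ℝ => Real.exp (-y^2) * Faux y)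
        (Real.exp (-x^2) * -(2*x) * Faux x + Real.exp (-x^2) * Real.exp (x^2)) x :=
      hne.exp.mul (hFaux x)
    have hg := hp.div (hasDerivAt_id x) hx0
    simp only [id_eq] at hg
    rw [show (fun x => Real.exp (-x^2) * Faux x / x) = ((fun y => Real.exp (-y^2) * Faux y) / id) from rfl, hg.deriv]
    have hnum : (Real.exp (-x^2) * -(2*x) * Faux x + Real.exp (-x^2) * Real.exp (x^2)) * x
        - Real.exp (-x^2) * Faux x * 1 < 0 := by
      have hk := key x (Set.mem_Ioi.1 hx)
      have hee : Real.exp (-x^2) * Real.exp (x^2) = 1 := by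
        rw [← Real.exp_add]; simp
      have hepos : (0:ℝ) < Real.exp (-x^2) := Real.exp_pos _
      rw [hee]
      have := mul_lt_mul_of_pos_left hk hepos
      have hx' : Real.exp (-x^2) * (x * Real.exp (x^2)) = x := by
        rw [show Real.exp (-x^2) * (x * Real.exp (x^2)) = x * (Real.exp (-x^2) * Real.exp (x^2)) by ring, hee, mul_one]
      nlinarith [this]
    exact div_neg_of_neg_of_pos hnum (by positivity)

/-- K is strictly decreasing on (0, ∞). -/
theorem K_strictAntiOn : StrictAntiOn K (Set.Ioi (0:ℝ)) := by
  have hEq : Set.EqOn (fun x => Real.exp (-x^2) * Faux x / x) K (Set.Ioi (0:ℝ)) := by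
    intro x hx
    have hπ : Real.sqrt Real.pi ≠ 0 := ne_of_gt (Real.sqrt_pos.2 Real.pi_pos)
    have hx0 : x ≠ 0 := (Set.mem_Ioi.1 hx).ne'
    simp only [K, erfi, Faux]
    field_simp
  exact fun a ha b hb hab => by
    rw [← hEq ha, ← hEq hb]
    exact G_strictAnti ha hb hab
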